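/- Let G' be as above with the list assignment L given. Suppose c is an L-coloring of G' with c(x) = α, and suppose w_j, w_{j+1}, w_{j+2}, w_{j+3} (for some 1 ≤ j ≤ 9) all avoid color α, so c(w_l) = l for l = j,…,j+3. If c is 2-defective then: at least one of a_j, b_j, c_j is colored j+1; hence at least two of a_{j+1}, b_{j+1}, c_{j+1} are colored j+2; hence all three of a_{j+2}, b_{j+2}, c_{j+2} are colored j+3; and then w_{j+3} has three neighbors colored j+3, a contradiction. Therefore no such 2-defective L-coloring exists with four consecutive w's in {w_1,…,w_12} avoiding α. -/
import Mathlib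


open scoped Classical

/-- The vertex set of the graph `G'` from the paper: a vertex `x`, a path `w_1, …, w_24`
(indexed here by `Fin 24`, so `GadgetV.w i` is the paper's `w_{i+1}`), and for each
`i ∈ {1, …, 23}` three vertices `a_i`, `b_i`, `c_i`. -/
inductive GadgetV : Type
  | x : GadgetV
  | w : Fin 24 → GadgetV
  | a : Fin 23 → GadgetV
  | b : Fin 23 → GadgetV
  | c : Fin 23 → GadgetV
  deriving DecidableEq

/-- Base adjacency: `x` is adjacent to every `w_i`; the `w_i` form a path; and each of
`a_i`, `b_i`, `c_i` is adjacent to both `w_i` and `w_{i+1}`. -/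
def gadgetRel : GadgetV → GadgetV → Prop
  | .x, .w _ => True
  | .w i, .w j => (j : ℕ) = (i : ℕ) + 1
  | .a i, .w j => (j : ℕ) = (i : ℕ) ∨ (j : ℕ) = (i : ℕ) + 1
  | .b i, .w j => (j : ℕ) = (i : ℕ) ∨ (j : ℕ) = (i : ℕ) + 1
  | .c i, .w j => (j : ℕ) = (i : ℕ) ∨ (j : ℕ) = (i : ℕ) + 1
  | _, _ => False

/-- The graph `G'`. -/
def GadgetG : SimpleGraph GadgetV := SimpleGraph.fromRel gadgetRel

/-- The list assignment of the paper, with color `α` encoded as `25` and `β` as `26`, and the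
paper's color `i ∈ {1, …, 24}` encoded as the natural number `i`:
`L(x) = {α, β}`, `L(w_i) = {i, α}` for `i ≤ 12`, `L(w_i) = {i, β}` for `i ≥ 13`, and
`L(a_i) = L(b_i) = L(c_i) = {i, i+1}`. -/
def gadgetL : GadgetV → Finset ℕ
  | .x => {25, 26}
  | .w i => if (i : ℕ) < 12 then {(i : ℕ) + 1, 25} else {(i : ℕ) + 1, 26}
  | .a i => {(i : ℕ) + 1, (i : ℕ) + 2}
  | .b i => {(i : ℕ) + 1, (i : ℕ) + 2}
  | .c i => {(i : ℕ) + 1, (i : ℕ) + 2}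

/-- A coloring is `d`-defective if every vertex has at most `d` neighbors of its own color. -/
def DefColoring {V : Type*} {α : Type*} (G : SimpleGraph V) (d : ℕ) (c : V → α) : Prop :=
  ∀ v, {u | G.Adj v u ∧ c u = c v}.ncard ≤ d

instance : Finite GadgetV := by
  apply Finite.of_surjective (fun p : (Unit ⊕ Fin 24 ⊕ Fin 23 ⊕ Fin 23 ⊕ Fin 23) => match p with
    | .inl _ => GadgetV.x
    | .inr (.inl i) => .w i
    | .inr (.inr (.inl i)) => .a i
    | .inr (.inr (.inr (.inl i))) => .b i
    | .inr (.inr (.inr (.inr i))) => .c i)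
  intro v
  cases v with
  | x => exact ⟨.inl (), rfl⟩
  | w i => exact ⟨.inr (.inl i), rfl⟩
  | a i => exact ⟨.inr (.inr (.inl i)), rfl⟩
  | b i => exact ⟨.inr (.inr (.inr (.inl i))), rfl⟩
  | c i => exact ⟨.inr (.inr (.inr (.inr i))), rfl⟩

lemma gadget_not_three {f : GadgetV → ℕ} (hdef : DefColoring GadgetG 2 f)
    {v u1 u2 u3 : GadgetV}
    (h12 : u1 ≠ u2) (h13 : u1 ≠ u3) (h23 : u2 ≠ u3)
    (a1 : GadgetG.Adj v u1) (a2 : GadgetG.Adj v u2) (a3 : GadgetG.Adj v u3)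
    (e1 : f u1 = f v) (e2 : f u2 = f v) (e3 : f u3 = f v) : False := by
  have hsub : ({u1, u2, u3} : Set GadgetV) ⊆ {u | GadgetG.Adj v u ∧ f u = f v} := by
    rintro u (rfl | rfl | rfl) <;> exact ⟨by assumption, by assumption⟩
  have h3 : ({u1, u2, u3} : Set GadgetV).ncard = 3 := by
    rw [Set.ncard_insert_of_notMem (by simp [h12, h13]),
      Set.ncard_insert_of_notMem (by simp [h23]), Set.ncard_singleton]
  have hle := Set.ncard_le_ncard hsub (Set.toFinite _)
  have := hdef v
  omega

/-- uniform access to the triple `a i, b i, c i` -/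
def gtri (k : Fin 3) (i : Fin 23) : GadgetV :=
  match k with
  | 0 => .a i
  | 1 => .b i
  | 2 => .c i

lemma gtri_ne {k k' : Fin 3} (i : Fin 23) (h : k ≠ k') : gtri k i ≠ gtri k' i := by
  fin_cases k <;> fin_cases k' <;> simp_all [gtri]

lemma gtri_ne' (k k' : Fin 3) {i i' : Fin 23} (h : i ≠ i') : gtri k i ≠ gtri k' i' := by
  fin_cases k <;> fin_cases k' <;> simp [gtri] <;> exact fun h' => h h'

lemma gtri_mem {f : GadgetV → ℕ} (hf : ∀ v, f v ∈ gadgetL v) (k : Fin 3) (i : Fin 23) :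
    f (gtri k i) = (i : ℕ) + 1 ∨ f (gtri k i) = (i : ℕ) + 2 := by
  fin_cases k
  · simpa [gtri, gadgetL] using hf (.a i)
  · simpa [gtri, gadgetL] using hf (.b i)
  · simpa [gtri, gadgetL] using hf (.c i)

lemma adj_w_gtri (k : Fin 3) (i : Fin 23) (m : ℕ) (hm : m < 24)
    (h : m = (i : ℕ) ∨ m = (i : ℕ) + 1) : GadgetG.Adj (.w ⟨m, hm⟩) (gtri k i) := by
  fin_cases k <;>
    exact (SimpleGraph.fromRel_adj _ _ _).mpr ⟨by simp [gtri], Or.inr h⟩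

lemma pigeon (P Q : Fin 3 → Prop) (h : ∀ k, P k ∨ Q k)
    (hQ : ∀ k k', k ≠ k' → Q k → ¬ Q k') :
    ∃ k k', k ≠ k' ∧ P k ∧ P k' := by
  rcases h 0 with p0 | q0
  · rcases h 1 with p1 | q1
    · exact ⟨0, 1, by decide, p0, p1⟩
    · rcases h 2 with p2 | q2
      · exact ⟨0, 2, by decide, p0, p2⟩
      · exact absurd q2 (hQ 1 2 (by decide) q1)
  · rcases h 1 with p1 | q1
    · rcases h 2 with p2 | q2
      · exact ⟨1, 2, by decide, p1, p2⟩
      · exact absurd q2 (hQ 0 2 (by decide) q0)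
    · exact absurd q1 (hQ 0 1 (by decide) q0)

set_option maxHeartbeats 1000000 in
/-- No `L`-coloring of `G'` with `f(x) = α` in which four consecutive vertices
`w_j, w_{j+1}, w_{j+2}, w_{j+3}` among `w_1, …, w_12` all avoid color `α` can be
`2`-defective: the colors of `a_i, b_i, c_i` are forced along the window until `w_{j+3}`
gets three neighbors of its own color. -/
theorem gadget_no_defective_coloring_with_window (f : GadgetV → ℕ)
    (hf : ∀ v, f v ∈ gadgetL v) (hx : f .x = 25)
    (j : ℕ) (hj : j + 3 ≤ 11)
    (havoid : ∀ (t : ℕ) (_ht : t ≤ 3), f (.w ⟨j + t, by omega⟩) ≠ 25) :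
    ¬ DefColoring GadgetG 2 f := by
  intro hdef
  have hw : ∀ t : ℕ, (ht : t ≤ 3) → f (.w ⟨j + t, by omega⟩) = j + t + 1 := by
    intro t ht
    have h1 := hf (.w ⟨j + t, by omega⟩)
    have h2 := havoid t ht
    simp only [gadgetL] at h1
    have hlt : ((⟨j + t, by omega⟩ : Fin 24) : ℕ) < 12 := by
      show j + t < 12; omega
    rw [if_pos hlt] at h1
    simp only [Finset.mem_insert, Finset.mem_singleton] at h1
    rcases h1 with h1 | h1
    · exact h1
    · exact absurd h1 h2
  have pj0 : j < 23 := by omega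
  have pj1 : j + 1 < 23 := by omega
  have pj2 : j + 2 < 23 := by omega
  have qj0 : j < 24 := by omega
  have qj1 : j + 1 < 24 := by omega
  have qj2 : j + 2 < 24 := by omega
  have qj3 : j + 3 < 24 := by omega
  have hw0 : f (.w ⟨j, qj0⟩) = j + 1 := hw 0 (by omega)
  have hw1 : f (.w ⟨j + 1, qj1⟩) = j + 2 := hw 1 (by omega)
  have hw2 : f (.w ⟨j + 2, qj2⟩) = j + 3 := hw 2 (by omega)
  have hw3 : f (.w ⟨j + 3, qj3⟩) = j + 4 := hw 3 (by omega)
  clear hx havoid hw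
  -- Step 1: some member of the triple at index j gets color j+2
  have step1 : ∃ k, f (gtri k ⟨j, pj0⟩) = j + 2 := by
    by_contra h
    push_neg at h
    have hv : ∀ k, f (gtri k (⟨j, pj0⟩ : Fin 23)) = j + 1 := by
      intro k
      have hm := gtri_mem hf k (⟨j, pj0⟩ : Fin 23)
      rcases hm with h' | h'
      · simpa using h'
      · exact absurd (by simpa using h') (h k)
    have e : ∀ k : Fin 3, f (gtri k ⟨j, pj0⟩) = f (.w (⟨j, qj0⟩ : Fin 24)) := by
      intro k; rw [hv k, hw0]
    exact gadget_not_three hdef (gtri_ne _ (by decide)) (gtri_ne _ (by decide))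
      (gtri_ne _ (by decide))
      (adj_w_gtri 0 ⟨j, pj0⟩ j qj0 (Or.inl rfl))
      (adj_w_gtri 1 ⟨j, pj0⟩ j qj0 (Or.inl rfl))
      (adj_w_gtri 2 ⟨j, pj0⟩ j qj0 (Or.inl rfl))
      (e 0) (e 1) (e 2)
  obtain ⟨k0, hk0⟩ := step1
  -- Step 2: two members of the triple at index j+1 get color j+3
  have step2 : ∃ k k', k ≠ k' ∧ f (gtri k ⟨j + 1, pj1⟩) = j + 3 ∧
      f (gtri k' ⟨j + 1, pj1⟩) = j + 3 := by
    by_contra h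
    push_neg at h
    obtain ⟨k1, k2, hkk, h1, h2⟩ := pigeon
      (fun k => f (gtri k ⟨j + 1, pj1⟩) = j + 2)
      (fun k => f (gtri k ⟨j + 1, pj1⟩) = j + 3)
      (fun k => by
        have hm := gtri_mem hf k (⟨j + 1, pj1⟩ : Fin 23)
        rcases hm with h' | h'
        · left; simpa using h'
        · right; simpa using h')
      (fun k k' hne hk hk' => by exact absurd (h k k' hne hk) (fun hh => hh hk'))
    have e0 : f (gtri k0 ⟨j, pj0⟩) = f (.w (⟨j + 1, qj1⟩ : Fin 24)) := by
      rw [hk0, hw1]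
    have e1 : f (gtri k1 ⟨j + 1, pj1⟩) = f (.w (⟨j + 1, qj1⟩ : Fin 24)) := by
      rw [h1, hw1]
    have e2 : f (gtri k2 ⟨j + 1, pj1⟩) = f (.w (⟨j + 1, qj1⟩ : Fin 24)) := by
      rw [h2, hw1]
    exact gadget_not_three hdef
      (gtri_ne' k0 k1 (by simp only [ne_eq, Fin.mk.injEq]; omega))
      (gtri_ne' k0 k2 (by simp only [ne_eq, Fin.mk.injEq]; omega))
      (gtri_ne _ hkk)
      (adj_w_gtri k0 ⟨j, pj0⟩ (j + 1) qj1 (Or.inr rfl))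
      (adj_w_gtri k1 ⟨j + 1, pj1⟩ (j + 1) qj1 (Or.inl rfl))
      (adj_w_gtri k2 ⟨j + 1, pj1⟩ (j + 1) qj1 (Or.inl rfl))
      e0 e1 e2
  obtain ⟨k1, k2, hkk, hk1, hk2⟩ := step2
  -- Step 3: all members of the triple at index j+2 get color j+4
  have step3 : ∀ k, f (gtri k ⟨j + 2, pj2⟩) = j + 4 := by
    intro k
    have hm := gtri_mem hf k (⟨j + 2, pj2⟩ : Fin 23)
    rcases hm with h' | h'
    · exfalso
      have h3 : f (gtri k (⟨j + 2, pj2⟩ : Fin 23)) = j + 3 := by simpa using h'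
      have e1 : f (gtri k1 ⟨j + 1, pj1⟩) = f (.w (⟨j + 2, qj2⟩ : Fin 24)) := by
        rw [hk1, hw2]
      have e2 : f (gtri k2 ⟨j + 1, pj1⟩) = f (.w (⟨j + 2, qj2⟩ : Fin 24)) := by
        rw [hk2, hw2]
      have e3 : f (gtri k ⟨j + 2, pj2⟩) = f (.w (⟨j + 2, qj2⟩ : Fin 24)) := by
        rw [h3, hw2]
      exact gadget_not_three hdef
        (gtri_ne _ hkk)
        (gtri_ne' k1 k (by simp only [ne_eq, Fin.mk.injEq]; omega))
        (gtri_ne' k2 k (by simp only [ne_eq, Fin.mk.injEq]; omega))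
        (adj_w_gtri k1 ⟨j + 1, pj1⟩ (j + 2) qj2 (Or.inr rfl))
        (adj_w_gtri k2 ⟨j + 1, pj1⟩ (j + 2) qj2 (Or.inr rfl))
        (adj_w_gtri k ⟨j + 2, pj2⟩ (j + 2) qj2 (Or.inl rfl))
        e1 e2 e3
    · simpa using h'
  -- Final contradiction at w_{j+3}
  have e : ∀ k : Fin 3, f (gtri k ⟨j + 2, pj2⟩) = f (.w (⟨j + 3, qj3⟩ : Fin 24)) := by
    intro k; rw [step3 k, hw3]
  exact gadget_not_three hdef (gtri_ne _ (by decide)) (gtri_ne _ (by decide))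
    (gtri_ne _ (by decide))
    (adj_w_gtri 0 ⟨j + 2, pj2⟩ (j + 3) qj3 (Or.inr rfl))
    (adj_w_gtri 1 ⟨j + 2, pj2⟩ (j + 3) qj3 (Or.inr rfl))
    (adj_w_gtri 2 ⟨j + 2, pj2⟩ (j + 3) qj3 (Or.inr rfl))
    (e 0) (e 1) (e 2)
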